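/- The quadratic form of the normalized non-linear sheaf hypergraph Laplacian equals twice the sheaf total variation: x^T Δ̄^F x = Σ_e (1/δ_e) max_{u,v∈e} ||F_{v⊴e} D_v^{-1/2} x_v − F_{u⊴e} D_u^{-1/2} x_u||², assuming for each hyperedge e the selected pair (u_e, v_e) attains the maximum. -/
import Mathlib


open Matrix Finset

private lemma dot_sum' {n : ℕ} {ι : Type*} (s : Finset ι) (v : Fin n → ℝ)
    (w : ι → Fin n → ℝ) : v ⬝ᵥ (∑ e ∈ s, w e) = ∑ e ∈ s, v ⬝ᵥ w e := by
  simp only [dotProduct, Finset.sum_apply, Finset.mul_sum]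
  exact Finset.sum_comm

private lemma sq_swap (a b : ℝ) : (a - b) ^ 2 = (b - a) ^ 2 := by ring

/-- the quadratic form of the normalized non-linear sheaf
hypergraph Laplacian `Δ̄^F(x) = D^{-1/2} L̄^F (D^{-1/2} x)` equals twice the
sheaf total variation:
`xᵀ Δ̄^F x = ∑_e (1/δ_e) max_{u,v∈e} ‖F_{v⊴e} D_v^{-1/2} x_v − F_{u⊴e} D_u^{-1/2} x_u‖²`,
where for each hyperedge `e` the selected pair `sel e = (u_e, v_e)` attains the
maximum discrepancy, and `u ∼_e v` iff `{u,v} = {u_e,v_e}`. `Dih v` plays the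
role of `D_v^{-1/2}`. -/
theorem quadForm_nonlinear_sheafDelta_eq_two_mul_TV
    {V E : Type} [Fintype V] [Fintype E] [DecidableEq V] (d : ℕ)
    (mem : E → Finset V) (F : V → E → Matrix (Fin d) (Fin d) ℝ)
    (Dih : V → Matrix (Fin d) (Fin d) ℝ)
    (hsym : ∀ v, (Dih v)ᵀ = Dih v)
    (hinv : ∀ v, IsUnit (∑ e : E, if v ∈ mem e then (F v e)ᵀ * F v e else 0))
    (hD : ∀ v, Dih v * (∑ e : E, if v ∈ mem e then (F v e)ᵀ * F v e else 0) * Dih v = 1)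
    (x : V → Fin d → ℝ)
    (sel : E → V × V)
    (hmem : ∀ e, (sel e).1 ∈ mem e ∧ (sel e).2 ∈ mem e)
    (hmax : ∀ e, ∀ u ∈ mem e, ∀ v ∈ mem e,
      (∑ i : Fin d, ((F u e).mulVec ((Dih u).mulVec (x u)) i
          - (F v e).mulVec ((Dih v).mulVec (x v)) i) ^ 2) ≤
      (∑ i : Fin d, ((F (sel e).1 e).mulVec ((Dih (sel e).1).mulVec (x (sel e).1)) i
          - (F (sel e).2 e).mulVec ((Dih (sel e).2).mulVec (x (sel e).2)) i) ^ 2)) :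
    -- z = D^{-1/2} x; the non-linear Laplacian acts as
    -- `L̄(z)_v = ∑_{e : u ∼_e v} (1/δ_e) F_{v⊴e}ᵀ (F_{v⊴e} z_v − F_{u⊴e} z_u)`,
    -- and the quadratic form is `∑_v ⟨x_v, D_v^{-1/2} L̄(z)_v⟩`.
    (∑ v : V, ∑ i : Fin d, x v i *
      (Dih v).mulVec
        (∑ e ∈ Finset.univ.filter (fun e => v = (sel e).1 ∨ v = (sel e).2),
          (1 / ((mem e).card : ℝ)) •
            (F v e)ᵀ.mulVec
              ((F v e).mulVec ((Dih v).mulVec (x v))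
                - (F (if v = (sel e).1 then (sel e).2 else (sel e).1) e).mulVec
                    ((Dih (if v = (sel e).1 then (sel e).2 else (sel e).1)).mulVec
                      (x (if v = (sel e).1 then (sel e).2 else (sel e).1))))) i) =
    ∑ e : E, (1 / ((mem e).card : ℝ)) *
      ((mem e ×ˢ mem e).sup'
        (Finset.nonempty_product.mpr ⟨⟨(sel e).1, (hmem e).1⟩, ⟨(sel e).2, (hmem e).2⟩⟩)
        (fun p => ∑ i : Fin d,
          ((F p.2 e).mulVec ((Dih p.2).mulVec (x p.2)) i
            - (F p.1 e).mulVec ((Dih p.1).mulVec (x p.1)) i) ^ 2)) := by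
  classical
  -- abbreviations
  set z : V → Fin d → ℝ := fun v => (Dih v).mulVec (x v) with hz
  set g : E → V → Fin d → ℝ := fun e v => (F v e).mulVec (z v) with hgdef
  set S : E → ℝ := fun e => ∑ i : Fin d, (g e (sel e).2 i - g e (sel e).1 i) ^ 2 with hS
  -- the sup' equals the value at the selected pair
  have hsup : ∀ e : E,
      ((mem e ×ˢ mem e).sup'
        (Finset.nonempty_product.mpr ⟨⟨(sel e).1, (hmem e).1⟩, ⟨(sel e).2, (hmem e).2⟩⟩)
        (fun p => ∑ i : Fin d,
          ((F p.2 e).mulVec ((Dih p.2).mulVec (x p.2)) i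
            - (F p.1 e).mulVec ((Dih p.1).mulVec (x p.1)) i) ^ 2)) = S e := by
    intro e
    apply le_antisymm
    · apply Finset.sup'_le
      intro p hp
      rw [Finset.mem_product] at hp
      have h := hmax e p.2 hp.2 p.1 hp.1
      calc (∑ i : Fin d,
          ((F p.2 e).mulVec ((Dih p.2).mulVec (x p.2)) i
            - (F p.1 e).mulVec ((Dih p.1).mulVec (x p.1)) i) ^ 2)
          ≤ (∑ i : Fin d, ((F (sel e).1 e).mulVec ((Dih (sel e).1).mulVec (x (sel e).1)) i
            - (F (sel e).2 e).mulVec ((Dih (sel e).2).mulVec (x (sel e).2)) i) ^ 2) := h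
        _ = S e := by
            simp only [hS, hgdef, hz]
            exact Finset.sum_congr rfl fun i _ => sq_swap _ _
    · have hmemp : ((sel e).1, (sel e).2) ∈ mem e ×ˢ mem e :=
        Finset.mem_product.mpr ⟨(hmem e).1, (hmem e).2⟩
      have h := Finset.le_sup' (fun p : V × V => ∑ i : Fin d,
          ((F p.2 e).mulVec ((Dih p.2).mulVec (x p.2)) i
            - (F p.1 e).mulVec ((Dih p.1).mulVec (x p.1)) i) ^ 2) hmemp
      simpa only [hS, hgdef, hz] using h
  have hR : (∑ e : E, (1 / ((mem e).card : ℝ)) *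
      ((mem e ×ˢ mem e).sup'
        (Finset.nonempty_product.mpr ⟨⟨(sel e).1, (hmem e).1⟩, ⟨(sel e).2, (hmem e).2⟩⟩)
        (fun p => ∑ i : Fin d,
          ((F p.2 e).mulVec ((Dih p.2).mulVec (x p.2)) i
            - (F p.1 e).mulVec ((Dih p.1).mulVec (x p.1)) i) ^ 2))) =
      ∑ e : E, (1 / ((mem e).card : ℝ)) * S e :=
    Finset.sum_congr rfl fun e _ => by rw [hsup e]
  rw [hR]
  -- rewrite each vertex term using dot products
  have step1 : ∀ v : V, (∑ i : Fin d, x v i *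
      (Dih v).mulVec
        (∑ e ∈ Finset.univ.filter (fun e => v = (sel e).1 ∨ v = (sel e).2),
          (1 / ((mem e).card : ℝ)) •
            (F v e)ᵀ.mulVec
              ((F v e).mulVec ((Dih v).mulVec (x v))
                - (F (if v = (sel e).1 then (sel e).2 else (sel e).1) e).mulVec
                    ((Dih (if v = (sel e).1 then (sel e).2 else (sel e).1)).mulVec
                      (x (if v = (sel e).1 then (sel e).2 else (sel e).1))))) i) =
      ∑ e ∈ Finset.univ.filter (fun e => v = (sel e).1 ∨ v = (sel e).2),
        (1 / ((mem e).card : ℝ)) *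
          (g e v ⬝ᵥ (g e v - g e (if v = (sel e).1 then (sel e).2 else (sel e).1))) := by
    intro v
    have h1 : (∑ i : Fin d, x v i * (Dih v).mulVec
        (∑ e ∈ Finset.univ.filter (fun e => v = (sel e).1 ∨ v = (sel e).2),
          (1 / ((mem e).card : ℝ)) •
            (F v e)ᵀ.mulVec
              ((F v e).mulVec ((Dih v).mulVec (x v))
                - (F (if v = (sel e).1 then (sel e).2 else (sel e).1) e).mulVec
                    ((Dih (if v = (sel e).1 then (sel e).2 else (sel e).1)).mulVec
                      (x (if v = (sel e).1 then (sel e).2 else (sel e).1))))) i) =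
        x v ⬝ᵥ (Dih v).mulVec
        (∑ e ∈ Finset.univ.filter (fun e => v = (sel e).1 ∨ v = (sel e).2),
          (1 / ((mem e).card : ℝ)) •
            (F v e)ᵀ.mulVec
              ((F v e).mulVec ((Dih v).mulVec (x v))
                - (F (if v = (sel e).1 then (sel e).2 else (sel e).1) e).mulVec
                    ((Dih (if v = (sel e).1 then (sel e).2 else (sel e).1)).mulVec
                      (x (if v = (sel e).1 then (sel e).2 else (sel e).1))))) := rfl
    rw [h1, Matrix.dotProduct_mulVec, ← Matrix.mulVec_transpose, hsym, dot_sum']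
    apply Finset.sum_congr rfl
    intro e _
    rw [dotProduct_smul, smul_eq_mul, Matrix.dotProduct_mulVec,
      ← Matrix.mulVec_transpose, Matrix.transpose_transpose]
  simp only [step1]
  -- swap the order of summation
  have swap : (∑ v : V, ∑ e ∈ Finset.univ.filter (fun e => v = (sel e).1 ∨ v = (sel e).2),
        (1 / ((mem e).card : ℝ)) *
          (g e v ⬝ᵥ (g e v - g e (if v = (sel e).1 then (sel e).2 else (sel e).1)))) =
      ∑ e : E, ∑ v ∈ Finset.univ.filter (fun v => v = (sel e).1 ∨ v = (sel e).2),
        (1 / ((mem e).card : ℝ)) *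
          (g e v ⬝ᵥ (g e v - g e (if v = (sel e).1 then (sel e).2 else (sel e).1))) := by
    simp only [Finset.sum_filter]
    exact Finset.sum_comm
  rw [swap]
  -- evaluate the inner sum for each edge
  apply Finset.sum_congr rfl
  intro e _
  set s1 := (sel e).1 with hs1
  set s2 := (sel e).2 with hs2
  have hfilt : Finset.univ.filter (fun v => v = s1 ∨ v = s2) = {s1, s2} := by
    ext v; simp [Finset.mem_insert]
  rw [hfilt]
  by_cases h12 : s1 = s2
  · -- degenerate case : both contributions vanish
    have : ({s1, s2} : Finset V) = {s1} := by rw [h12]; simp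
    rw [this, Finset.sum_singleton]
    have hif : (if s1 = s1 then s2 else s1) = s1 := by rw [if_pos rfl, ← h12]
    rw [hif, sub_self, dotProduct_zero, mul_zero]
    have : S e = 0 := by
      simp only [hS, ← hs1, ← hs2, ← h12, sub_self]
      simp
    rw [this, mul_zero]
  · -- generic case
    rw [Finset.sum_pair h12]
    have hif1 : (if s1 = s1 then s2 else s1) = s2 := if_pos rfl
    have hif2 : (if s2 = s1 then s2 else s1) = s1 := if_neg (Ne.symm h12)
    rw [hif1, hif2, ← mul_add]
    congr 1
    simp only [hS, ← hs1, ← hs2, dotProduct, Pi.sub_apply, ← Finset.sum_add_distrib]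
    exact Finset.sum_congr rfl fun i _ => by ring
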